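/- arXiv:2511.15576 — 2 statements merged into one kernel-verified Lean document; each statement's English description precedes it below -/
import Mathlib

section
/- The stabilizer 2-Rényi entropy is invariant under Clifford unitaries: for every n, every Clifford unitary C on ℂ^(2^n), and every unit vector v ∈ ℂ^(2^n) with ψ = v vᴴ, one has M₂(C ψ Cᴴ) = M₂(ψ). -/
noncomputable section
open Matrix

/-- The four single-qubit Pauli matrices I, X, Y, Z. -/
def pauli : Fin 4 → Matrix (Fin 2) (Fin 2) ℂ :=
  ![1, !![0, 1; 1, 0], !![0, -Complex.I; Complex.I, 0], !![1, 0; 0, -1]]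

/-- An `n`-qubit Pauli string σ₁ ⊗ ⋯ ⊗ σₙ, given entrywise by the product of the
entries of the single-qubit factors (the Kronecker product). -/
def pauliString (n : ℕ) (f : Fin n → Fin 4) :
    Matrix (Fin n → Fin 2) (Fin n → Fin 2) ℂ :=
  Matrix.of fun v w => ∏ i : Fin n, pauli (f i) (v i) (w i)

/-- Rank-one density matrix v vᴴ. -/
def dm {ι : Type*} (v : ι → ℂ) : Matrix ι ι ℂ := Matrix.vecMulVec v (star v)

/-- Stabilizer 2-Rényi entropy of an `n`-qubit state. -/
def M2 (n : ℕ) (ψ : Matrix (Fin n → Fin 2) (Fin n → Fin 2) ℂ) : ℝ :=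
  - Real.logb 2 ((1 / 2 ^ n) *
      ∑ f : Fin n → Fin 4, ‖(pauliString n f * ψ).trace‖ ^ 4)

/-- A unitary on `n` qubits is Clifford if it maps every Pauli string to a Pauli
string up to a sign. -/
def IsClifford (n : ℕ) (C : Matrix (Fin n → Fin 2) (Fin n → Fin 2) ℂ) : Prop :=
  C ∈ Matrix.unitaryGroup (Fin n → Fin 2) ℂ ∧
    ∀ f : Fin n → Fin 4, ∃ (g : Fin n → Fin 4) (s : ℝ),
      (s = 1 ∨ s = -1) ∧ C * pauliString n f * Cᴴ = (s : ℂ) • pauliString n g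

/-!
Conjugation by a Clifford unitary `C` sends each Pauli string `P` to `±Q` for a Pauli string `Q`,
and `Tr (Q · C ψ Cᴴ) = ± Tr (P ψ)` by cyclicity of the trace. The assignment `P ↦ Q` is injective,
because conjugation preserves the trace form `Tr (A B)` and distinct Pauli strings are orthogonal
for it; hence it permutes the Pauli strings, and the sum of fourth powers in `M2` is unchanged.
-/

section PiKronecker

variable {ι κ R : Type*} [Fintype ι] [DecidableEq ι] [Fintype κ] [CommSemiring R]

def piKronecker (A : ι → Matrix κ κ R) : Matrix (ι → κ) (ι → κ) R :=
  of fun v w => ∏ i, A i (v i) (w i)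

theorem piKronecker_mul (A B : ι → Matrix κ κ R) :
    piKronecker A * piKronecker B = piKronecker (A * B) := by
  ext v w
  simp only [piKronecker, mul_apply, of_apply, Pi.mul_apply, ← Finset.prod_mul_distrib]
  exact (Fintype.prod_sum fun i k => A i (v i) k * B i k (w i)).symm

theorem trace_piKronecker (A : ι → Matrix κ κ R) : (piKronecker A).trace = ∏ i, (A i).trace :=
  (Fintype.prod_sum fun i k => A i k k).symm

end PiKronecker

theorem trace_pauli_mul_pauli (a b : Fin 4) :
    (pauli a * pauli b).trace = if a = b then 2 else 0 := by
  fin_cases a <;> fin_cases b <;>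
    simp [pauli, trace_fin_two, Complex.ext_iff] <;> norm_num

theorem pauliString_eq_piKronecker (n : ℕ) (f : Fin n → Fin 4) :
    pauliString n f = piKronecker (pauli ∘ f) :=
  rfl

theorem trace_pauliString_mul_pauliString {n : ℕ} (f g : Fin n → Fin 4) :
    (pauliString n f * pauliString n g).trace = if f = g then 2 ^ n else 0 := by
  rw [pauliString_eq_piKronecker, pauliString_eq_piKronecker, piKronecker_mul, trace_piKronecker]
  simp only [Pi.mul_apply, Function.comp_apply, trace_pauli_mul_pauli]
  split_ifs with h
  · simp [h]
  · obtain ⟨i, hi⟩ := Function.ne_iff.mp h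
    exact Finset.prod_eq_zero (Finset.mem_univ i) (if_neg hi)

theorem trace_conj_mul_conj {ι R : Type*} [Fintype ι] [DecidableEq ι] [CommSemiring R]
    {C D : Matrix ι ι R} (h : D * C = 1) (A B : Matrix ι ι R) :
    (C * A * D * (C * B * D)).trace = (A * B).trace := by
  calc (C * A * D * (C * B * D)).trace = (C * (A * (D * C) * B) * D).trace := by
        simp only [Matrix.mul_assoc]
    _ = (A * B).trace := by
        rw [trace_mul_cycle, ← Matrix.mul_assoc, h, Matrix.one_mul, Matrix.mul_one]

namespace IsClifford

variable {n : ℕ} {C : Matrix (Fin n → Fin 2) (Fin n → Fin 2) ℂ}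

theorem conjTranspose_mul_self (hC : IsClifford n C) : Cᴴ * C = 1 := by
  simpa [star_eq_conjTranspose] using hC.1.1

theorem exists_perm_norm_trace_conj (hC : IsClifford n C) :
    ∃ σ : Equiv.Perm (Fin n → Fin 4), ∀ ψ f,
      ‖(pauliString n (σ f) * (C * ψ * Cᴴ)).trace‖ = ‖(pauliString n f * ψ).trace‖ := by
  choose g s hs hconj using hC.2
  have hunit := hC.conjTranspose_mul_self
  have hs_norm : ∀ f, ‖(s f : ℂ)‖ = 1 := fun f => by rcases hs f with h | h <;> simp [h]
  have hs_ne : ∀ f, (s f : ℂ) ≠ 0 := fun f => norm_ne_zero_iff.mp (hs_norm f ▸ one_ne_zero)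
  have hg : g.Injective := by
    intro f f' hff'
    have htr := trace_conj_mul_conj hunit (pauliString n f) (pauliString n f')
    rw [hconj, hconj, hff', smul_mul_smul_comm, trace_smul, trace_pauliString_mul_pauliString,
      trace_pauliString_mul_pauliString, if_pos rfl] at htr
    by_contra hne
    rw [if_neg hne, smul_eq_mul] at htr
    exact mul_ne_zero (mul_ne_zero (hs_ne f) (hs_ne f')) (pow_ne_zero n two_ne_zero) htr
  refine ⟨Equiv.ofBijective g (Finite.injective_iff_bijective.mp hg), fun ψ f => ?_⟩
  have htr := trace_conj_mul_conj hunit (pauliString n f) ψ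
  rw [hconj, smul_mul_assoc, trace_smul, smul_eq_mul] at htr
  rw [Equiv.ofBijective_apply, ← htr, norm_mul, hs_norm, one_mul]

end IsClifford

theorem clifford_invariance_of_stabilizer_entropy_general
    (n : ℕ) (C : Matrix (Fin n → Fin 2) (Fin n → Fin 2) ℂ) (hC : IsClifford n C)
    (v : (Fin n → Fin 2) → ℂ) :
    M2 n (C * dm v * Cᴴ) = M2 n (dm v) := by
  obtain ⟨σ, hσ⟩ := hC.exists_perm_norm_trace_conj
  unfold M2
  congr 3
  exact (Fintype.sum_equiv σ _ _ fun f => by rw [hσ]).symm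

theorem clifford_invariance_of_stabilizer_entropy
    (n : ℕ) (C : Matrix (Fin n → Fin 2) (Fin n → Fin 2) ℂ) (hC : IsClifford n C)
    (v : (Fin n → Fin 2) → ℂ) (hv : ∑ i, Complex.normSq (v i) = 1) :
    M2 n (C * dm v * Cᴴ) = M2 n (dm v) :=
  clifford_invariance_of_stabilizer_entropy_general n C hC v
end
end

section
/- The stabilizer 2-Rényi entropy is additive under tensor products: for unit vectors v ∈ ℂ^(2^m) and w ∈ ℂ^(2^n), one has M₂((v ⊗ w)(v ⊗ w)ᴴ) = M₂(v vᴴ) + M₂(w wᴴ), where v ⊗ w denotes the Kronecker product vector on m + n qubits. -/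
/-!
The expectation of a Kronecker product of Pauli strings in a product state factors,
Tr((P ⊗ Q)(ψ ⊗ φ)) = Tr(P ψ) · Tr(Q φ), so the sum of fourth powers over all Pauli strings
on `m + n` qubits is the product of the two single-factor sums, and so is the normalisation
`2^(m+n) = 2^m · 2^n`. Taking `-log₂` turns the product into a sum; the logarithms are
taken of positive numbers because the identity string alone contributes `Tr ψ = 1`.
-/

noncomputable section
open Matrix Kronecker

/-- Stabilizer 2-Rényi entropy of an `(m+n)`-qubit state, with the Hilbert space of
`m + n` qubits realized as the tensor product of the `m`- and `n`-qubit spaces;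
the Pauli strings on `m + n` qubits are the Kronecker products of the Pauli strings
of the two factors. -/
def M2prod (m n : ℕ)
    (ψ : Matrix ((Fin m → Fin 2) × (Fin n → Fin 2)) ((Fin m → Fin 2) × (Fin n → Fin 2)) ℂ) :
    ℝ :=
  - Real.logb 2 ((1 / 2 ^ (m + n)) *
      ∑ fg : (Fin m → Fin 4) × (Fin n → Fin 4),
        ‖((pauliString m fg.1 ⊗ₖ pauliString n fg.2) * ψ).trace‖ ^ 4)

/-- Tensor (Kronecker) product of vectors. -/
def tens {α β : Type*} (v : α → ℂ) (w : β → ℂ) : α × β → ℂ := fun p => v p.1 * w p.2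

def pauliFourthMoment (n : ℕ) (ψ : Matrix (Fin n → Fin 2) (Fin n → Fin 2) ℂ) : ℝ :=
  ∑ f : Fin n → Fin 4, ‖(pauliString n f * ψ).trace‖ ^ 4

lemma dm_tens {α β : Type*} (v : α → ℂ) (w : β → ℂ) : dm (tens v w) = dm v ⊗ₖ dm w := by
  ext ⟨i, j⟩ ⟨k, l⟩
  simp only [dm, tens, vecMulVec_apply, kroneckerMap_apply, Pi.star_apply, star_mul']
  ring

lemma trace_kronecker_mul_dm_tens {α β : Type*} [Fintype α] [Fintype β]
    (A : Matrix α α ℂ) (B : Matrix β β ℂ) (v : α → ℂ) (w : β → ℂ) :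
    ((A ⊗ₖ B) * dm (tens v w)).trace = (A * dm v).trace * (B * dm w).trace := by
  rw [dm_tens, ← mul_kronecker_mul, trace_kronecker]

lemma trace_dm {ι : Type*} [Fintype ι] (v : ι → ℂ) :
    (dm v).trace = ∑ i, (Complex.normSq (v i) : ℂ) := by
  simp [dm, Matrix.trace, vecMulVec_apply, Complex.mul_conj]

lemma pauliString_zero (n : ℕ) : pauliString n 0 = 1 := by
  ext a b
  simp only [pauliString, pauli, of_apply, Pi.zero_apply, cons_val_zero, one_apply,
    Finset.prod_boole]
  simp [funext_iff]

lemma one_le_pauliFourthMoment (n : ℕ) (v : (Fin n → Fin 2) → ℂ)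
    (hv : ∑ i, Complex.normSq (v i) = 1) : 1 ≤ pauliFourthMoment n (dm v) := by
  have hid : ‖(pauliString n 0 * dm v).trace‖ ^ 4 = 1 := by
    rw [pauliString_zero, one_mul, trace_dm, ← Complex.ofReal_sum, hv, Complex.ofReal_one,
      norm_one, one_pow]
  rw [← hid]
  exact Finset.single_le_sum (f := fun f => ‖(pauliString n f * dm v).trace‖ ^ 4)
    (fun f _ => by positivity) (Finset.mem_univ _)

lemma sum_kronecker_pauli_dm_tens (m n : ℕ) (v : (Fin m → Fin 2) → ℂ)
    (w : (Fin n → Fin 2) → ℂ) :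
    ∑ fg : (Fin m → Fin 4) × (Fin n → Fin 4),
        ‖((pauliString m fg.1 ⊗ₖ pauliString n fg.2) * dm (tens v w)).trace‖ ^ 4
      = pauliFourthMoment m (dm v) * pauliFourthMoment n (dm w) := by
  simp only [pauliFourthMoment, Fintype.sum_mul_sum, Fintype.sum_prod_type,
    trace_kronecker_mul_dm_tens, norm_mul, mul_pow]

theorem stabilizer_entropy_additive
    (m n : ℕ) (v : (Fin m → Fin 2) → ℂ) (w : (Fin n → Fin 2) → ℂ)
    (hv : ∑ i, Complex.normSq (v i) = 1)
    (hw : ∑ i, Complex.normSq (w i) = 1) :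
    M2prod m n (dm (tens v w)) = M2 m (dm v) + M2 n (dm w) := by
  have hA := one_le_pauliFourthMoment m v hv
  have hB := one_le_pauliFourthMoment n w hw
  have hx : (0 : ℝ) < 1 / 2 ^ m * pauliFourthMoment m (dm v) := by positivity
  have hy : (0 : ℝ) < 1 / 2 ^ n * pauliFourthMoment n (dm w) := by positivity
  calc M2prod m n (dm (tens v w))
      = -Real.logb 2 ((1 / 2 ^ m * pauliFourthMoment m (dm v)) *
          (1 / 2 ^ n * pauliFourthMoment n (dm w))) := by
        rw [M2prod, sum_kronecker_pauli_dm_tens, pow_add]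
        ring_nf
    _ = M2 m (dm v) + M2 n (dm w) := by
        rw [Real.logb_mul hx.ne' hy.ne', neg_add]
        rfl
end
end
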